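/- Let φ be the semiflow of an impulsive dynamical system (X, φ̄, D, I) with τ_D continuous and I(Ω_φ ∩ D) ⊂ Ω_φ \ D, let h: Ω_φ \ D → Y be a continuous bimeasurable bijection onto a compact metric space Y conjugating φ restricted to Ω_φ \ D with a continuous semiflow ψ on Y, and let ι: Ω_φ \ D → X be the inclusion. Then the map (ι ∘ h⁻¹)_* from ψ-invariant probability measures on Y to φ-invariant probability measures on X is a bijection. -/

import Mathlib

open Set Filter Topology MeasureTheory Function
open scoped NNReal ENNReal Classical

/-- A semiflow on `X`: `φ 0 = id` and `φ (t+s) = φ t ∘ φ s`. -/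
def IsSemiflow {X : Type*} (φ : ℝ≥0 → X → X) : Prop :=
  (∀ x, φ 0 x = x) ∧ ∀ (s t : ℝ≥0) (x : X), φ (t + s) x = φ t (φ s x)

/-- `x` is non-wandering for `φ`: every neighborhood `U` of `x` and every `T > 0`
admit `t ≥ T` with `φ t ⁻¹' U ∩ U ≠ ∅`. -/
def NonWandering {X : Type*} [TopologicalSpace X] (φ : ℝ≥0 → X → X) (x : X) : Prop :=
  ∀ U ∈ nhds x, ∀ T : ℝ≥0, 0 < T → ∃ t : ℝ≥0, T ≤ t ∧ (φ t ⁻¹' U ∩ U).Nonempty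

/-- The non-wandering set of `φ`. -/
def NonWanderingSet {X : Type*} [TopologicalSpace X] (φ : ℝ≥0 → X → X) : Set X :=
  {x | NonWandering φ x}

/-- The first impulsive time `τ₁(x)`: the infimum of positive times at which the base
semiflow trajectory of `x` hits `D` (equal to `∞` if it never does). -/
noncomputable def ImpulsiveTau {X : Type*} (φb : ℝ≥0 → X → X) (D : Set X) (x : X) : ℝ≥0∞ :=
  sInf ((fun t : ℝ≥0 => (t : ℝ≥0∞)) '' {t : ℝ≥0 | 0 < t ∧ φb t x ∈ D})

/-- `φ` is the impulsive semiflow of the impulsive dynamical system `(X, φb, D, I)`: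
it is a semiflow which follows `φb` strictly before the first impulsive time, and jumps
via `I` at the first impulsive time.  (Together with the semigroup property this
determines the whole impulsive trajectory.) -/
def IsImpulsiveSemiflow {X : Type*} (φb : ℝ≥0 → X → X) (D : Set X)
    (I : X → X) (φ : ℝ≥0 → X → X) : Prop :=
  IsSemiflow φ ∧
  (∀ x, ∀ t : ℝ≥0, (t : ℝ≥0∞) < ImpulsiveTau φb D x → φ t x = φb t x) ∧
  (∀ x, ∀ t : ℝ≥0, (t : ℝ≥0∞) = ImpulsiveTau φb D x → φ t x = I (φb t x))

/-!
Invariant probability measures of `φ` live on `Ω_φ \ D`. The complement of `Ω_φ` is covered by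
countably many wandering open sets, and a set is null as soon as, for every `N`, it has `N`
pairwise disjoint translates under the flow. The same argument shows that `D` is null: an orbit starting in `D` does not
return to `D` before the positive time `τ₁`. On `Ω_φ \ D`, which `φ` leaves invariant, `h`
conjugates `φ` to `ψ`, so `h⁻¹` is a measurable embedding with range `Ω_φ \ D` intertwining
the two flows, and push-forward along it is a bijection onto the measures carried by its range.
-/

theorem IsOpen.isSigmaCompact {X : Type*} [TopologicalSpace X] [LocallyCompactSpace X]
    [SecondCountableTopology X] {s : Set X} (hs : IsOpen s) : IsSigmaCompact s := by
  have := hs.locallyCompactSpace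
  exact isSigmaCompact_iff_sigmaCompactSpace.mpr inferInstance

section ImpulsiveTime

variable {X : Type*} {φb : ℝ≥0 → X → X} {D : Set X} {x : X}

def hittingSet (φb : ℝ≥0 → X → X) (D : Set X) (T : Set ℝ≥0) : Set X :=
  {x | ∃ t ∈ T, φb t x ∈ D}

theorem impulsiveTau_le_of_mem {t : ℝ≥0} (ht : 0 < t) (hx : φb t x ∈ D) :
    ImpulsiveTau φb D x ≤ t :=
  sInf_le ⟨t, ⟨ht, hx⟩, rfl⟩

theorem notMem_of_lt_impulsiveTau {t : ℝ≥0} (ht : 0 < t)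
    (h : (t : ℝ≥0∞) < ImpulsiveTau φb D x) :
    φb t x ∉ D :=
  fun hx => (impulsiveTau_le_of_mem ht hx).not_gt h

theorem impulsiveTau_lt_iff {ε : ℝ≥0∞} :
    ImpulsiveTau φb D x < ε ↔ ∃ t : ℝ≥0, 0 < t ∧ (t : ℝ≥0∞) < ε ∧ φb t x ∈ D := by
  simp only [ImpulsiveTau, sInf_lt_iff, mem_image]
  aesop

variable [TopologicalSpace X]

theorem mem_of_impulsiveTau_eq (hc : Continuous fun t => φb t x) (hD : IsClosed D) {s : ℝ≥0}
    (hs : ImpulsiveTau φb D x = s) : φb s x ∈ D := by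
  set A := {t : ℝ≥0 | 0 < t ∧ φb t x ∈ D}
  have hne : A.Nonempty := by
    by_contra hA
    simp [ImpulsiveTau, A, not_nonempty_iff_eq_empty.mp hA] at hs
  have hsA : sInf A = s := by
    rw [ImpulsiveTau, sInf_image, ← ENNReal.coe_sInf hne] at hs
    exact_mod_cast hs
  have hmem : s ∈ closure A := hsA ▸ csInf_mem_closure hne (OrderBot.bddBelow A)
  exact closure_minimal (fun t ht => ht.2) (hD.preimage hc) hmem

variable (hcb : Continuous fun p : ℝ≥0 × X => φb p.1 p.2) (hD : IsClosed D)
include hcb hD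

theorem isClosed_hittingSet {T : Set ℝ≥0} (hT : IsCompact T) :
    IsClosed (hittingSet φb D T) := by
  have := isCompact_iff_compactSpace.mp hT
  have hproj : hittingSet φb D T = Prod.snd '' {p : T × X | φb p.1 p.2 ∈ D} := by
    ext x
    simp [hittingSet]
  rw [hproj]
  exact isClosedMap_snd_of_compactSpace _ (hD.preimage (by fun_prop))

theorem measurableSet_hittingSet [MeasurableSpace X] [OpensMeasurableSpace X] {T : Set ℝ≥0}
    (hT : IsSigmaCompact T) : MeasurableSet (hittingSet φb D T) := by
  obtain ⟨K, hK, rfl⟩ := hT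
  have hunion : hittingSet φb D (⋃ n, K n) = ⋃ n, hittingSet φb D (K n) := by
    ext x
    simp only [hittingSet, mem_iUnion]
    exact ⟨fun ⟨t, ⟨n, ht⟩, hD⟩ => ⟨n, t, ht, hD⟩,
      fun ⟨n, t, ht, hD⟩ => ⟨t, ⟨n, ht⟩, hD⟩⟩
  rw [hunion]
  exact MeasurableSet.iUnion fun n => (isClosed_hittingSet hcb hD (hK n)).measurableSet

theorem measurable_impulsiveTau [MeasurableSpace X] [OpensMeasurableSpace X] :
    Measurable (ImpulsiveTau φb D) := by
  refine measurable_of_Iio fun ε => ?_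
  have hset :
      ImpulsiveTau φb D ⁻¹' Iio ε = hittingSet φb D {t | 0 < t ∧ (t : ℝ≥0∞) < ε} := by
    ext x
    simp only [mem_preimage, mem_Iio, impulsiveTau_lt_iff, hittingSet]
    aesop
  rw [hset]
  refine measurableSet_hittingSet hcb hD (IsOpen.isSigmaCompact ?_)
  exact isOpen_Ioi.inter (isOpen_lt ENNReal.continuous_coe continuous_const)

theorem notMem_hittingSet_Icc_zero_iff (hφb0 : ∀ x, φb 0 x = x) {s : ℝ≥0} :
    x ∉ hittingSet φb D (Icc 0 s) ↔ x ∉ D ∧ (s : ℝ≥0∞) < ImpulsiveTau φb D x := by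
  constructor
  · intro hx
    refine ⟨fun hxD => hx ⟨0, left_mem_Icc.mpr zero_le, (hφb0 x).symm ▸ hxD⟩, ?_⟩
    by_contra! hle
    obtain ⟨r, hr⟩ := WithTop.ne_top_iff_exists.mp (hle.trans_lt ENNReal.coe_lt_top).ne
    exact hx ⟨r, ⟨zero_le, ENNReal.coe_le_coe.mp (hr.trans_le hle)⟩,
      mem_of_impulsiveTau_eq (by fun_prop) hD hr.symm⟩
  · rintro ⟨hxD, hs⟩ ⟨t, ⟨-, hts⟩, htD⟩
    rcases eq_zero_or_pos t with rfl | ht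
    · exact hxD ((hφb0 x) ▸ htD)
    · exact notMem_of_lt_impulsiveTau ht ((ENNReal.coe_le_coe.mpr hts).trans_lt hs) htD

theorem lowerSemicontinuousAt_impulsiveTau (hφb0 : ∀ x, φb 0 x = x) (hx : x ∉ D) :
    LowerSemicontinuousAt (ImpulsiveTau φb D) x := by
  intro y hy
  obtain ⟨s, hys, hs⟩ := ENNReal.lt_iff_exists_nnreal_btwn.mp hy
  have hopen : IsOpen (hittingSet φb D (Icc 0 s))ᶜ :=
    (isClosed_hittingSet hcb hD isCompact_Icc).isOpen_compl
  have hxmem : x ∈ (hittingSet φb D (Icc 0 s))ᶜ :=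
    (notMem_hittingSet_Icc_zero_iff hcb hD hφb0).mpr ⟨hx, hs⟩
  filter_upwards [hopen.mem_nhds hxmem] with z hz
  exact hys.trans ((notMem_hittingSet_Icc_zero_iff hcb hD hφb0).mp hz).2

theorem exists_pos_le_impulsiveTau (hφb0 : ∀ x, φb 0 x = x)
    (hpos : ∀ x, 0 < ImpulsiveTau φb D x) {K : Set X} (hK : IsCompact K) (hKD : Disjoint K D) :
    ∃ c : ℝ≥0, 0 < c ∧ ∀ y ∈ K, (c : ℝ≥0∞) ≤ ImpulsiveTau φb D y := by
  rcases K.eq_empty_or_nonempty with rfl | hne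
  · exact ⟨1, one_pos, by simp⟩
  obtain ⟨a, -, hmin⟩ := LowerSemicontinuousOn.exists_isMinOn hne hK fun y hy =>
    (lowerSemicontinuousAt_impulsiveTau hcb hD hφb0
      (hKD.notMem_of_mem_left hy)).lowerSemicontinuousWithinAt K
  obtain ⟨c, hc0, hca⟩ := ENNReal.lt_iff_exists_nnreal_btwn.mp (hpos a)
  exact ⟨c, by exact_mod_cast hc0, fun y hy => hca.le.trans (hmin hy)⟩

end ImpulsiveTime

section NonWandering

variable {X : Type*} [TopologicalSpace X] {φ : ℝ≥0 → X → X}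

theorem isClosed_nonWanderingSet (φ : ℝ≥0 → X → X) : IsClosed (NonWanderingSet φ) := by
  refine isClosed_of_closure_subset fun x hx U hU T hT => ?_
  obtain ⟨V, hVU, hVo, hxV⟩ := mem_nhds_iff.mp hU
  obtain ⟨y, hyV, hy⟩ := mem_closure_iff.mp hx V hVo hxV
  obtain ⟨t, hTt, hne⟩ := hy V (hVo.mem_nhds hyV) T hT
  exact ⟨t, hTt, hne.mono (inter_subset_inter (preimage_mono hVU) hVU)⟩

theorem NonWandering.apply_of_continuousAt (hφ : IsSemiflow φ) {x : X} (hx : NonWandering φ x)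
    {s : ℝ≥0} (hc : ContinuousAt (φ s) x) : NonWandering φ (φ s x) := by
  intro U hU T hT
  obtain ⟨t, hTt, w, hw, hwU⟩ := hx _ (hc.preimage_mem_nhds hU) T hT
  refine ⟨t, hTt, φ s w, ?_, hwU⟩
  change φ t (φ s w) ∈ U
  rwa [← hφ.2, add_comm, hφ.2]

end NonWandering

section ForwardInvariance

variable {X : Type*} [TopologicalSpace X] {φb φ : ℝ≥0 → X → X} {D : Set X} {I : X → X}
  (hφb : IsSemiflow φb) (hcb : Continuous fun p : ℝ≥0 × X => φb p.1 p.2)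
  (hφ : IsImpulsiveSemiflow φb D I φ)
include hφb hcb hφ

theorem mem_nonWanderingSet_diff_of_lt (hD : IsClosed D) {x : X}
    (hx : x ∈ NonWanderingSet φ \ D) {s : ℝ≥0}
    (hs : (s : ℝ≥0∞) < ImpulsiveTau φb D x) :
    φ s x ∈ NonWanderingSet φ \ D := by
  have hev : φb s =ᶠ[𝓝 x] φ s :=
    (lowerSemicontinuousAt_impulsiveTau hcb hD hφb.1 hx.2 s hs).mono fun z hz =>
      (hφ.2.1 z s hz).symm
  have hc : ContinuousAt (φ s) x := ((by fun_prop : Continuous (φb s)).continuousAt).congr hev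
  refine ⟨NonWandering.apply_of_continuousAt hφ.1 hx.1 hc, ?_⟩
  rw [hφ.2.1 x s hs]
  rcases eq_zero_or_pos s with rfl | hs0
  · rw [hφb.1]
    exact hx.2
  · exact notMem_of_lt_impulsiveTau hs0 hs

theorem mem_nonWanderingSet_inter_of_eq (hD : IsClosed D) {x : X}
    (hx : x ∈ NonWanderingSet φ \ D) {s : ℝ≥0} (hs : ImpulsiveTau φb D x = s)
    (hs0 : 0 < s) :
    φb s x ∈ NonWanderingSet φ ∩ D := by
  refine ⟨?_, mem_of_impulsiveTau_eq (by fun_prop) hD hs⟩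
  have hcl : s ∈ closure (Iio s) := by
    rw [closure_Iio' (⟨0, hs0⟩ : (Iio s).Nonempty)]
    exact self_mem_Iic
  have hmaps : MapsTo (fun u => φb u x) (Iio s) (NonWanderingSet φ) := fun u hu => by
    have hu' : (u : ℝ≥0∞) < ImpulsiveTau φb D x := hs ▸ ENNReal.coe_lt_coe.mpr hu
    change φb u x ∈ _
    rw [← hφ.2.1 x u hu']
    exact (mem_nonWanderingSet_diff_of_lt hφb hcb hφ hD hx hu').1
  exact (isClosed_nonWanderingSet φ).closure_subset
    (map_mem_closure (f := fun u => φb u x) (by fun_prop) hcl hmaps)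

variable (hpos : ∀ x, 0 < ImpulsiveTau φb D x)
include hpos

theorem apply_mem_image_of_impulsiveTau_eq (hD : IsClosed D) {x : X}
    (hx : x ∈ NonWanderingSet φ \ D) {s : ℝ≥0} (hs : ImpulsiveTau φb D x = s) :
    φ s x ∈ I '' (NonWanderingSet φ ∩ D) := by
  have hs0 : 0 < s := by exact_mod_cast hs ▸ hpos x
  exact ⟨_, mem_nonWanderingSet_inter_of_eq hφb hcb hφ hD hx hs hs0,
    (hφ.2.2 x s hs.symm).symm⟩

variable (hID : I '' (NonWanderingSet φ ∩ D) ⊆ NonWanderingSet φ \ D)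
include hID

theorem apply_mem_or_exists_impulse (hD : IsClosed D) {x : X} (hx : x ∈ NonWanderingSet φ \ D)
    (t : ℝ≥0) :
    φ t x ∈ NonWanderingSet φ \ D ∨ ∃ r < t, (r : ℝ≥0∞) = ImpulsiveTau φb D x ∧
      φ t x = φ (t - r) (φ r x) ∧ φ r x ∈ I '' (NonWanderingSet φ ∩ D) := by
  rcases lt_trichotomy (t : ℝ≥0∞) (ImpulsiveTau φb D x) with hlt | heq | hgt
  · exact .inl (mem_nonWanderingSet_diff_of_lt hφb hcb hφ hD hx hlt)
  · exact .inl (hID (apply_mem_image_of_impulsiveTau_eq hφb hcb hφ hpos hD hx heq.symm))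
  · obtain ⟨r, hr⟩ := WithTop.ne_top_iff_exists.mp (hgt.trans ENNReal.coe_lt_top).ne
    have hrt : r < t := ENNReal.coe_lt_coe.mp (hr.trans_lt hgt)
    refine .inr ⟨r, hrt, hr, by rw [← hφ.1.2, tsub_add_cancel_of_le hrt.le], ?_⟩
    exact apply_mem_image_of_impulsiveTau_eq hφb hcb hφ hpos hD hx hr.symm

/-- The post-impulse points `I(Ω ∩ D)` form a compact subset of `Ω \ D`, so their impulsive
times are bounded below by some `c > 0`; consecutive impulses are thus `c` apart and no
orbit starting in `Ω \ D` can leave it. -/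
theorem mapsTo_nonWanderingSet_diff [T2Space X] (hD : IsCompact D) (hI : ContinuousOn I D)
    (t : ℝ≥0) :
    MapsTo (φ t) (NonWanderingSet φ \ D) (NonWanderingSet φ \ D) := by
  set K := I '' (NonWanderingSet φ ∩ D)
  have hKc : IsCompact K := by
    refine IsCompact.image_of_continuousOn ?_ (hI.mono inter_subset_right)
    exact inter_comm D _ ▸ hD.inter_right (isClosed_nonWanderingSet φ)
  obtain ⟨c, hc0, hc⟩ := exists_pos_le_impulsiveTau hcb hD.isClosed hφb.1 hpos hKc
    (disjoint_left.mpr fun y hy => (hID hy).2)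
  have hsplit := fun x (hx : x ∈ NonWanderingSet φ \ D) =>
    apply_mem_or_exists_impulse hφb hcb hφ hpos hID hD.isClosed hx
  have hK : ∀ n : ℕ, ∀ y ∈ K, ∀ t ≤ n * c, φ t y ∈ NonWanderingSet φ \ D := by
    intro n
    induction n with
    | zero =>
      intro y hy t ht
      rw [Nat.cast_zero, zero_mul, nonpos_iff_eq_zero] at ht
      rw [ht, hφ.1.1]
      exact hID hy
    | succ n ih =>
      intro y hy t ht
      rcases hsplit _ (hID hy) t with h | ⟨r, -, hr, heq, hrK⟩
      · exact h
      rw [heq]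
      have hcr : c ≤ r := by exact_mod_cast hr ▸ hc y hy
      refine ih _ hrK _ ?_
      calc t - r ≤ (n + 1) * c - c := tsub_le_tsub (by exact_mod_cast ht) hcr
        _ = n * c := by rw [add_mul, one_mul, add_tsub_cancel_right]
  intro x hx
  rcases hsplit _ hx t with h | ⟨r, -, -, heq, hrK⟩
  · exact h
  obtain ⟨n, hn⟩ := exists_nat_ge ((t - r) / c)
  rw [heq]
  exact hK n _ hrK _ ((div_le_iff₀ hc0).mp hn)

end ForwardInvariance

section NullSets

variable {X : Type*} [MeasurableSpace X] (μ : Measure X) [IsFiniteMeasure μ]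

/-- Needed because `f` is not assumed measurable, so `f ⁻¹' A` itself may not be. -/
theorem exists_measurableSet_subset_preimage {f : X → X}
    (hf : ∀ B, MeasurableSet B → μ (f ⁻¹' B) = μ B) {A : Set X} (hA : MeasurableSet A) :
    ∃ K, MeasurableSet K ∧ K ⊆ f ⁻¹' A ∧ μ K = μ A := by
  obtain ⟨B, hsub, hBm, hBμ⟩ := exists_measurable_superset μ (f ⁻¹' Aᶜ)
  refine ⟨Bᶜ, hBm.compl, fun x hx => by_contra fun hfx => hx (hsub hfx), ?_⟩
  rw [measure_compl hBm (measure_ne_top μ B), hBμ, hf _ hA.compl, measure_compl hA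
    (measure_ne_top μ A),
    ENNReal.sub_sub_cancel (measure_ne_top μ univ) (measure_mono (subset_univ A))]

theorem measure_eq_zero_of_forall_pairwise_disjoint_preimage {A : Set X} (hA : MeasurableSet A)
    (h : ∀ N : ℕ, ∃ f : Fin N → X → X,
      (∀ k B, MeasurableSet B → μ (f k ⁻¹' B) = μ B) ∧
      Pairwise (Disjoint on fun k => f k ⁻¹' A)) :
    μ A = 0 := by
  have hle : ∀ N : ℕ, N * μ A ≤ μ univ := by
    intro N
    obtain ⟨f, hf, hdisj⟩ := h N
    choose K hKm hKsub hKμ using fun k => exists_measurableSet_subset_preimage μ (hf k) hA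
    calc N * μ A = ∑ k, μ (K k) := by simp [hKμ]
      _ = μ (⋃ k, K k) := by
        rw [measure_iUnion (hdisj.mono fun i j h => h.mono (hKsub i) (hKsub j)) hKm, tsum_fintype]
      _ ≤ μ univ := measure_mono (subset_univ _)
  by_contra hne
  obtain ⟨N, hN⟩ := ENNReal.exists_nat_gt (ENNReal.div_lt_top (measure_ne_top μ univ) hne).ne
  exact (hle N).not_gt ((ENNReal.div_lt_iff (.inl hne) (.inl (measure_ne_top μ A))).mp hN)

variable {φ : ℝ≥0 → X → X} (hφ : IsSemiflow φ)
  (hinv : ∀ t A, MeasurableSet A → μ (φ t ⁻¹' A) = μ A)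
include hφ hinv

theorem measure_eq_zero_of_forall_not_return {A : Set X} (hA : MeasurableSet A)
    (h : ∀ N : ℕ, ∃ δ : ℝ≥0, ∀ j : ℕ, 0 < j → j < N → ∀ y ∈ A, φ (j * δ) y ∉ A) :
    μ A = 0 := by
  refine measure_eq_zero_of_forall_pairwise_disjoint_preimage μ hA fun N => ?_
  obtain ⟨δ, hδ⟩ := h N
  refine ⟨fun k => φ (k * δ), fun k => hinv _, ?_⟩
  refine (Std.Symm.pairwise_on _).mpr fun k k' hkk' => disjoint_left.mpr ?_
  intro z hk hk'
  have hsum : ((k' - k : ℕ) : ℝ≥0) * δ + k * δ = k' * δ := by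
    rw [← add_mul, ← Nat.cast_add, Nat.sub_add_cancel (Fin.le_def.mp hkk'.le)]
  refine hδ (k' - k) (Nat.sub_pos_of_lt hkk') ((Nat.sub_le _ _).trans_lt k'.2) _ hk ?_
  rw [← hφ.2, hsum]
  exact hk'

theorem measure_eq_zero_of_wandering {A : Set X} (hA : MeasurableSet A) {T : ℝ≥0}
    (hw : ∀ t ≥ T, ∀ y ∈ A, φ t y ∉ A) : μ A = 0 :=
  measure_eq_zero_of_forall_not_return μ hφ hinv hA fun _ => ⟨T, fun j hj _ =>
    hw _ (le_mul_of_one_le_left zero_le (by exact_mod_cast hj))⟩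

theorem measure_compl_nonWanderingSet [TopologicalSpace X] [SecondCountableTopology X]
    [OpensMeasurableSpace X] : μ (NonWanderingSet φ)ᶜ = 0 := by
  refine measure_null_of_locally_null _ fun x hx => ?_
  replace hx : ¬NonWandering φ x := hx
  unfold NonWandering at hx
  push Not at hx
  obtain ⟨U, hU, T, -, hw⟩ := hx
  refine ⟨interior U, mem_nhdsWithin_of_mem_nhds (interior_mem_nhds.mpr hU), ?_⟩
  refine measure_eq_zero_of_wandering μ hφ hinv isOpen_interior.measurableSet (T := T)
    fun t ht y hy hty => ?_
  exact eq_empty_iff_forall_notMem.mp (hw t ht) y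
    ⟨interior_subset (s := U) hty, interior_subset hy⟩

end NullSets

section ImpulsiveNullSets

variable {X : Type*} [TopologicalSpace X] [MeasurableSpace X] [OpensMeasurableSpace X]
  {φb φ : ℝ≥0 → X → X} {D : Set X} {I : X → X}
  (hcb : Continuous fun p : ℝ≥0 × X => φb p.1 p.2) (hD : IsClosed D)
  (hφ : IsImpulsiveSemiflow φb D I φ) (μ : Measure X) [IsFiniteMeasure μ]
  (hinv : ∀ t A, MeasurableSet A → μ (φ t ⁻¹' A) = μ A)
include hcb hD hφ hinv

/-- An orbit starting in `D` with `ε < τ` does not meet `D` again before time `ε`, so the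
`N` time-`ε/N` translates of this set are disjoint for every `N`. -/
theorem measure_inter_setOf_lt_impulsiveTau {ε : ℝ≥0} (hε : 0 < ε) :
    μ (D ∩ {x | (ε : ℝ≥0∞) < ImpulsiveTau φb D x}) = 0 := by
  have hm : MeasurableSet (D ∩ {x | (ε : ℝ≥0∞) < ImpulsiveTau φb D x}) :=
    hD.measurableSet.inter (measurableSet_lt measurable_const (measurable_impulsiveTau hcb hD))
  refine measure_eq_zero_of_forall_not_return μ hφ.1 hinv hm fun N => ⟨ε / N, ?_⟩
  intro j hj hjN y hy hret
  have hN : (N : ℝ≥0) ≠ 0 := by exact_mod_cast (hj.trans hjN).ne'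
  have hjε : (j : ℝ≥0) * (ε / N) ≤ ε :=
    calc (j : ℝ≥0) * (ε / N) ≤ N * (ε / N) := by gcongr
      _ = ε := mul_div_cancel₀ ε hN
  have hlt : ((j * (ε / N) : ℝ≥0) : ℝ≥0∞) < ImpulsiveTau φb D y :=
    (ENNReal.coe_le_coe.mpr hjε).trans_lt hy.2
  have hpos : 0 < (j : ℝ≥0) * (ε / N) := by positivity
  rw [hφ.2.1 y _ hlt] at hret
  exact notMem_of_lt_impulsiveTau hpos hlt hret.1

theorem measure_eq_zero_of_impulsiveTau_pos (hpos : ∀ x, 0 < ImpulsiveTau φb D x) :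
    μ D = 0 := by
  refine measure_mono_null (fun x hx => ?_) (measure_iUnion_null fun n =>
    measure_inter_setOf_lt_impulsiveTau hcb hD hφ μ hinv (Nat.one_div_pos_of_nat (n := n)))
  obtain ⟨r, hr0, hr⟩ := ENNReal.lt_iff_exists_nnreal_btwn.mp (hpos x)
  obtain ⟨n, hn⟩ := exists_nat_one_div_lt (ENNReal.coe_pos.mp hr0)
  exact mem_iUnion.mpr ⟨n, hx, (ENNReal.coe_lt_coe.mpr hn).trans hr⟩

theorem measure_compl_nonWanderingSet_diff [SecondCountableTopology X]
    (hpos : ∀ x, 0 < ImpulsiveTau φb D x) : μ (NonWanderingSet φ \ D)ᶜ = 0 := by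
  refine measure_mono_null (fun x hx => ?_) (measure_union_null
    (measure_compl_nonWanderingSet μ hφ.1 hinv)
    (measure_eq_zero_of_impulsiveTau_pos hcb hD hφ μ hinv hpos))
  by_cases hxD : x ∈ D
  · exact .inr hxD
  · exact .inl fun hxΩ => hx ⟨hxΩ, hxD⟩

end ImpulsiveNullSets

section Conjugacy

variable {X Y : Type*} [Nonempty X] {h : X → Y} {S : Set X} (hbij : BijOn h S univ)
include hbij

theorem Set.BijOn.invFunOn_mem (y : Y) : invFunOn h S y ∈ S :=
  Function.invFunOn_mem (hbij.surjOn (mem_univ y))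

theorem Set.BijOn.apply_invFunOn (y : Y) : h (invFunOn h S y) = y :=
  Function.invFunOn_eq (hbij.surjOn (mem_univ y))

theorem Set.BijOn.image_invFunOn (B : Set Y) : invFunOn h S '' B = S ∩ h ⁻¹' B := by
  ext x
  constructor
  · rintro ⟨y, hy, rfl⟩
    exact ⟨hbij.invFunOn_mem y, by rwa [mem_preimage, hbij.apply_invFunOn]⟩
  · rintro ⟨hxS, hxB⟩
    exact ⟨h x, hxB, hbij.invOn_invFunOn.1 hxS⟩

theorem Set.BijOn.preimage_invFunOn (E : Set X) : invFunOn h S ⁻¹' E = h '' (E ∩ S) := by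
  ext y
  constructor
  · intro hy
    exact ⟨_, ⟨hy, hbij.invFunOn_mem y⟩, hbij.apply_invFunOn y⟩
  · rintro ⟨x, ⟨hxE, hxS⟩, rfl⟩
    rwa [mem_preimage, hbij.invOn_invFunOn.1 hxS]

theorem Set.BijOn.range_invFunOn : range (invFunOn h S) = S := by
  rw [← image_univ, hbij.image_invFunOn, preimage_univ, inter_univ]

theorem Set.BijOn.semiconj_invFunOn {f : X → X} {g : Y → Y} (hf : MapsTo f S S)
    (hconj : ∀ x ∈ S, g (h x) = h (f x)) : Semiconj (invFunOn h S) g f := by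
  intro y
  have hyS := hbij.invFunOn_mem y
  rw [← hbij.invOn_invFunOn.1 (hf hyS), ← hconj _ hyS, hbij.apply_invFunOn]

theorem Set.BijOn.measurableEmbedding_invFunOn [MeasurableSpace X] [MeasurableSpace Y]
    (hhm : ∀ B, MeasurableSet B → MeasurableSet (S ∩ h ⁻¹' B))
    (hhm' : ∀ A ⊆ S, MeasurableSet A → MeasurableSet (h '' A)) :
    MeasurableEmbedding (invFunOn h S) where
  injective := LeftInverse.injective hbij.apply_invFunOn
  measurable E hE := by
    have hS : MeasurableSet S := by simpa using hhm univ MeasurableSet.univ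
    rw [hbij.preimage_invFunOn]
    exact hhm' _ inter_subset_right (hE.inter hS)
  measurableSet_image' B hB := hbij.image_invFunOn B ▸ hhm B hB

end Conjugacy

def invariantProbabilities {ι X : Type*} [MeasurableSpace X] (φ : ι → X → X) :
    Set (Measure X) :=
  {μ | IsProbabilityMeasure μ ∧ ∀ t A, MeasurableSet A → μ (φ t ⁻¹' A) = μ A}

theorem MeasurableEmbedding.bijOn_map_invariantProbabilities {ι X Y : Type*} [MeasurableSpace X]
    [MeasurableSpace Y] {g : Y → X} (hg : MeasurableEmbedding g) {φ : ι → X → X}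
    {ψ : ι → Y → Y} (hconj : ∀ t, Semiconj g (ψ t) (φ t))
    (hsupp : ∀ μ ∈ invariantProbabilities φ, μ (range g)ᶜ = 0) :
    BijOn (Measure.map g) (invariantProbabilities ψ) (invariantProbabilities φ) := by
  refine ⟨?_, fun ν₁ _ ν₂ _ h => by rw [← hg.comap_map ν₁, h, hg.comap_map], ?_⟩
  · rintro ν ⟨hν, hinv⟩
    refine ⟨Measure.isProbabilityMeasure_map hg.measurable.aemeasurable, fun t A hA => ?_⟩
    have hpre : g ⁻¹' (φ t ⁻¹' A) = ψ t ⁻¹' (g ⁻¹' A) := by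
      ext y
      simp [hconj t y]
    rw [hg.map_apply, hg.map_apply, hpre, hinv t _ (hg.measurable hA)]
  · rintro μ ⟨hμ, hinv⟩
    have hS := hsupp μ ⟨hμ, hinv⟩
    refine ⟨μ.comap g, ⟨⟨?_⟩, fun t B hB => ?_⟩, ?_⟩
    · rw [hg.comap_apply, image_univ, ← prob_compl_eq_zero_iff hg.measurableSet_range, hS]
    · have himage : g '' (ψ t ⁻¹' B) = φ t ⁻¹' (g '' B) ∩ range g := by
        ext x
        constructor
        · rintro ⟨y, hy, rfl⟩
          exact ⟨⟨ψ t y, hy, hconj t y⟩, mem_range_self y⟩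
        · rintro ⟨⟨b, hb, hgb⟩, y, rfl⟩
          rw [← hconj t y] at hgb
          exact ⟨y, mem_preimage.mpr (hg.injective hgb ▸ hb), rfl⟩
      rw [hg.comap_apply, hg.comap_apply, himage, measure_inter_conull hS,
        hinv t _ (hg.measurableSet_image' hB)]
    · rw [hg.map_comap]
      exact Measure.restrict_eq_self_of_ae_mem (mem_ae_iff.mpr hS)

theorem stmt19_general {X : Type*} [MetricSpace X] [CompactSpace X] [Nonempty X]
    [MeasurableSpace X] [BorelSpace X]
    {Y : Type*}
    [MeasurableSpace Y]
    (φb : ℝ≥0 → X → X) (D : Set X) (I : X → X) (φ : ℝ≥0 → X → X)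
    (hφb : IsSemiflow φb) (hcb : Continuous fun p : ℝ≥0 × X => φb p.1 p.2)
    (hD : IsCompact D) (hI : ContinuousOn I D)
    (hpos : ∀ x, 0 < ImpulsiveTau φb D x)
    (hφ : IsImpulsiveSemiflow φb D I φ)
    (hID : I '' (NonWanderingSet φ ∩ D) ⊆ NonWanderingSet φ \ D)
    (ψ : ℝ≥0 → Y → Y)
    (h : X → Y)
    (hbij : BijOn h (NonWanderingSet φ \ D) univ)
    (hhm : ∀ B : Set Y, MeasurableSet B →
      MeasurableSet ((NonWanderingSet φ \ D) ∩ h ⁻¹' B))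
    (hhm' : ∀ A : Set X, A ⊆ NonWanderingSet φ \ D → MeasurableSet A →
      MeasurableSet (h '' A))
    (hconj : ∀ t : ℝ≥0, ∀ x ∈ NonWanderingSet φ \ D, ψ t (h x) = h (φ t x)) :
    BijOn (fun ν : Measure Y => ν.map (invFunOn h (NonWanderingSet φ \ D)))
      {ν : Measure Y | IsProbabilityMeasure ν ∧
        ∀ t : ℝ≥0, ∀ B : Set Y, MeasurableSet B → ν (ψ t ⁻¹' B) = ν B}
      {μ : Measure X | IsProbabilityMeasure μ ∧
        ∀ t : ℝ≥0, ∀ A : Set X, MeasurableSet A → μ (φ t ⁻¹' A) = μ A} := by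
  have hmaps := mapsTo_nonWanderingSet_diff hφb hcb hφ hpos hID hD hI
  have hg := hbij.measurableEmbedding_invFunOn hhm hhm'
  refine hg.bijOn_map_invariantProbabilities
    (fun t => hbij.semiconj_invFunOn (hmaps t) (hconj t)) ?_
  rintro μ ⟨hμ, hinv⟩
  rw [hbij.range_invFunOn]
  exact measure_compl_nonWanderingSet_diff hcb hD.isClosed hφ μ hinv hpos

/-- Let `φ` be the impulsive semiflow of `(X, φb, D, I)` with `τ_D` continuous and
`I(Ω_φ ∩ D) ⊆ Ω_φ \ D`.  If `h` is a continuous bimeasurable bijection from `Ω_φ \ D`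
onto a compact metric space `Y` conjugating `φ` (restricted to `Ω_φ \ D`) with a
continuous semiflow `ψ` on `Y`, then `(ι ∘ h⁻¹)_*` is a bijection from the
`ψ`-invariant Borel probability measures on `Y` onto the `φ`-invariant Borel
probability measures on `X`. -/
theorem stmt19 {X : Type*} [MetricSpace X] [CompactSpace X] [Nonempty X]
    [MeasurableSpace X] [BorelSpace X]
    {Y : Type*} [MetricSpace Y] [CompactSpace Y]
    [MeasurableSpace Y] [BorelSpace Y]
    (φb : ℝ≥0 → X → X) (D : Set X) (I : X → X) (φ : ℝ≥0 → X → X)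
    (hφb : IsSemiflow φb) (hcb : Continuous fun p : ℝ≥0 × X => φb p.1 p.2)
    (hD : IsCompact D) (hI : ContinuousOn I D)
    (hpos : ∀ x, 0 < ImpulsiveTau φb D x)
    (hφ : IsImpulsiveSemiflow φb D I φ)
    (htauD : ContinuousOn
      (fun x => if x ∈ D then (0 : ℝ≥0∞) else ImpulsiveTau φb D x) (NonWanderingSet φ))
    (hID : I '' (NonWanderingSet φ ∩ D) ⊆ NonWanderingSet φ \ D)
    (ψ : ℝ≥0 → Y → Y) (hψ : IsSemiflow ψ)
    (hψc : Continuous fun p : ℝ≥0 × Y => ψ p.1 p.2)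
    (h : X → Y)
    (hhc : ContinuousOn h (NonWanderingSet φ \ D))
    (hbij : BijOn h (NonWanderingSet φ \ D) univ)
    (hhm : ∀ B : Set Y, MeasurableSet B →
      MeasurableSet ((NonWanderingSet φ \ D) ∩ h ⁻¹' B))
    (hhm' : ∀ A : Set X, A ⊆ NonWanderingSet φ \ D → MeasurableSet A →
      MeasurableSet (h '' A))
    (hconj : ∀ t : ℝ≥0, ∀ x ∈ NonWanderingSet φ \ D, ψ t (h x) = h (φ t x)) :
    BijOn (fun ν : Measure Y => ν.map (invFunOn h (NonWanderingSet φ \ D)))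
      {ν : Measure Y | IsProbabilityMeasure ν ∧
        ∀ t : ℝ≥0, ∀ B : Set Y, MeasurableSet B → ν (ψ t ⁻¹' B) = ν B}
      {μ : Measure X | IsProbabilityMeasure μ ∧
        ∀ t : ℝ≥0, ∀ A : Set X, MeasurableSet A → μ (φ t ⁻¹' A) = μ A} :=
  stmt19_general φb D I φ hφb hcb hD hI hpos hφ hID ψ h hbij hhm hhm' hconj
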